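/- arXiv:2107.11732 — 6 statements merged into one kernel-verified Lean document; each statement's English description precedes it below -/
import Mathlib

section
/- Let p, q, D be positive integers. For each j = 1, …, D let the real (p+q)×(p+q) block matrix ((A_j, B_j), (B_jᵀ, C_j)) be positive semidefinite, where A_j is p×p symmetric, B_j is p×q, and C_j is q×q positive definite. Then ∑_{j=1}^D C_j is positive definite and, in the Loewner order, ∑_{j=1}^D (A_j − B_j C_j⁻¹ B_jᵀ) ⪯ (∑_{j=1}^D A_j) − (∑_{j=1}^D B_j)(∑_{j=1}^D C_j)⁻¹(∑_{j=1}^D B_j)ᵀ; that is, the Schur complement of the sum of positive semidefinite block matrices dominates the sum of their Schur complements. -/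
/-!
Only the matrix fractional function `(B, C) ↦ B C⁻¹ Bᴴ` matters, since the `A`-blocks cancel.
By the Schur complement criterion each `fromBlocks (Bⱼ Cⱼ⁻¹ Bⱼᴴ) Bⱼ Bⱼᴴ Cⱼ` is positive
semidefinite; so is their sum `fromBlocks (∑ Bⱼ Cⱼ⁻¹ Bⱼᴴ) (∑ Bⱼ) (∑ Bⱼ)ᴴ (∑ Cⱼ)`, and the
Schur complement criterion applied to that sum is the claim.
-/

namespace Matrix

variable {ι l m n o α : Type*}

theorem sum_fromBlocks [AddCommMonoid α] (s : Finset ι) (A : ι → Matrix n l α)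
    (B : ι → Matrix n m α) (C : ι → Matrix o l α) (D : ι → Matrix o m α) :
    ∑ i ∈ s, fromBlocks (A i) (B i) (C i) (D i) =
      fromBlocks (∑ i ∈ s, A i) (∑ i ∈ s, B i) (∑ i ∈ s, C i) (∑ i ∈ s, D i) := by
  classical
  induction s using Finset.induction_on with
  | empty => simp
  | insert i s hi ih => simp only [Finset.sum_insert hi, ih, fromBlocks_add]

variable [Fintype m] [Fintype n] [DecidableEq n]
  [Field α] [PartialOrder α] [StarRing α] [StarOrderedRing α]

theorem PosDef.posSemidef_fromBlocks_mul_inv_mul_conjTranspose {C : Matrix n n α}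
    (hC : C.PosDef) (B : Matrix m n α) :
    (fromBlocks (B * C⁻¹ * Bᴴ) B Bᴴ C).PosSemidef := by
  have := hC.isUnit.invertible
  rw [PosDef.fromBlocks₂₂ _ _ hC, sub_self]
  exact .zero

theorem posSemidef_sum_mul_inv_mul_conjTranspose_sub {s : Finset ι}
    {B : ι → Matrix m n α} {C : ι → Matrix n n α} (hC : ∀ i ∈ s, (C i).PosDef) :
    (∑ i ∈ s, B i * (C i)⁻¹ * (B i)ᴴ
      - (∑ i ∈ s, B i) * (∑ i ∈ s, C i)⁻¹ * (∑ i ∈ s, B i)ᴴ).PosSemidef := by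
  rcases s.eq_empty_or_nonempty with rfl | hs
  · simpa using PosSemidef.zero
  have hCsum := posDef_sum hs hC
  have := hCsum.isUnit.invertible
  have hblocks := posSemidef_sum s fun i hi =>
    (hC i hi).posSemidef_fromBlocks_mul_inv_mul_conjTranspose (B i)
  rw [sum_fromBlocks, ← conjTranspose_sum] at hblocks
  exact (PosDef.fromBlocks₂₂ _ _ hCsum).mp hblocks

end Matrix

open Matrix

theorem schur_complement_of_sum_dominates_sum_of_schur_complements_general
    (p q D : ℕ) (hD : 0 < D)
    (A : Fin D → Matrix (Fin p) (Fin p) ℝ)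
    (B : Fin D → Matrix (Fin p) (Fin q) ℝ)
    (C : Fin D → Matrix (Fin q) (Fin q) ℝ)
    (hC : ∀ j, (C j).PosDef) :
    (∑ j, C j).PosDef ∧
      ((∑ j, A j) - (∑ j, B j) * (∑ j, C j)⁻¹ * (∑ j, B j)ᵀ
        - ∑ j, (A j - B j * (C j)⁻¹ * (B j)ᵀ)).PosSemidef := by
  refine ⟨posDef_sum ⟨⟨0, hD⟩, Finset.mem_univ _⟩ fun j _ => hC j, ?_⟩
  have key := posSemidef_sum_mul_inv_mul_conjTranspose_sub (s := .univ) (B := B)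
    fun j _ => hC j
  rw [Finset.sum_sub_distrib, sub_sub_sub_cancel_left]
  simpa only [conjTranspose_eq_transpose_of_trivial] using key

/-- **Schur complement of a sum dominates the sum of Schur complements.**
If each block matrix `((Aⱼ, Bⱼ), (Bⱼᵀ, Cⱼ))` is positive semidefinite with `Cⱼ` positive
definite, then `∑ Cⱼ` is positive definite and, in the Loewner order,
`∑ (Aⱼ − Bⱼ Cⱼ⁻¹ Bⱼᵀ) ⪯ (∑ Aⱼ) − (∑ Bⱼ)(∑ Cⱼ)⁻¹(∑ Bⱼ)ᵀ`. -/
theorem schur_complement_of_sum_dominates_sum_of_schur_complements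
    (p q D : ℕ) (hp : 0 < p) (hq : 0 < q) (hD : 0 < D)
    (A : Fin D → Matrix (Fin p) (Fin p) ℝ)
    (B : Fin D → Matrix (Fin p) (Fin q) ℝ)
    (C : Fin D → Matrix (Fin q) (Fin q) ℝ)
    (hA : ∀ j, (A j).IsSymm)
    (hC : ∀ j, (C j).PosDef)
    (hblock : ∀ j, (Matrix.fromBlocks (A j) (B j) (B j)ᵀ (C j)).PosSemidef) :
    (∑ j, C j).PosDef ∧
      ((∑ j, A j) - (∑ j, B j) * (∑ j, C j)⁻¹ * (∑ j, B j)ᵀ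
        - ∑ j, (A j - B j * (C j)⁻¹ * (B j)ᵀ)).PosSemidef :=
  schur_complement_of_sum_dominates_sum_of_schur_complements_general p q D hD A B C hC
end

section
/- Let n₁, n₂, p be positive integers, let M₁ ∈ ℝ^{n₁×p} and M₂ ∈ ℝ^{n₂×p} be matrices with M₁ᵀM₁ and M₂ᵀM₂ invertible, and let a₁ ∈ ℝ^{n₁}, a₂ ∈ ℝ^{n₂}. Then M₁ᵀM₁ + M₂ᵀM₂ is invertible and (a₁ᵀM₁ + a₂ᵀM₂)(M₁ᵀM₁ + M₂ᵀM₂)⁻¹(M₁ᵀa₁ + M₂ᵀa₂) ≤ a₁ᵀM₁(M₁ᵀM₁)⁻¹M₁ᵀa₁ + a₂ᵀM₂(M₂ᵀM₂)⁻¹M₂ᵀa₂. -/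
/-!
Both sides are values of concave quadratic maximisation problems. For each `i`,
`aᵢᵀ Pᵢ aᵢ = max_x (2 (Mᵢᵀ aᵢ)ᵀ x - xᵀ Mᵢᵀ Mᵢ x)`, with `Pᵢ` the orthogonal projection onto the
column space of `Mᵢ`, while the left-hand side is the value of the sum of these two objectives at
its maximiser `x = (M₁ᵀM₁ + M₂ᵀM₂)⁻¹ (M₁ᵀ a₁ + M₂ᵀ a₂)`. The maximum of a sum is at most the sum of
the maxima.
-/

open Matrix

namespace Matrix

variable {m n : Type*} [Fintype m] [Fintype n]

lemma two_mul_dotProduct_sub_dotProduct_self_le (u v : m → ℝ) :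
    2 * (u ⬝ᵥ v) - v ⬝ᵥ v ≤ u ⬝ᵥ u := by
  have h := dotProduct_star_self_nonneg (R := ℝ) (u - v)
  simp only [star_trivial, sub_dotProduct, dotProduct_sub, dotProduct_comm v u] at h
  linarith

lemma transpose_mulVec_dotProduct (M : Matrix m n ℝ) (a : m → ℝ) (x : n → ℝ) :
    (Mᵀ *ᵥ a) ⬝ᵥ x = a ⬝ᵥ (M *ᵥ x) := by
  rw [mulVec_transpose, dotProduct_mulVec]

lemma posSemidef_transpose_mul_self (M : Matrix m n ℝ) : (Mᵀ * M).PosSemidef := by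
  simpa using posSemidef_conjTranspose_mul_self M

variable [DecidableEq n]

/-- The orthogonal projection onto the column space of `M`, when `Mᵀ * M` is invertible. -/
noncomputable def colSpaceProj (M : Matrix m n ℝ) : Matrix m m ℝ := M * (Mᵀ * M)⁻¹ * Mᵀ

variable {M : Matrix m n ℝ}

lemma colSpaceProj_transpose : (colSpaceProj M)ᵀ = colSpaceProj M := by
  rw [colSpaceProj, transpose_mul, transpose_mul, transpose_transpose, transpose_nonsing_inv,
    transpose_mul, transpose_transpose, Matrix.mul_assoc]

lemma colSpaceProj_mul_self (hM : IsUnit (Mᵀ * M)) : colSpaceProj M * M = M := by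
  rw [colSpaceProj, Matrix.mul_assoc, Matrix.mul_assoc,
    nonsing_inv_mul _ ((isUnit_iff_isUnit_det _).mp hM), Matrix.mul_one]

lemma colSpaceProj_mul_colSpaceProj (hM : IsUnit (Mᵀ * M)) :
    colSpaceProj M * colSpaceProj M = colSpaceProj M :=
  calc colSpaceProj M * colSpaceProj M = colSpaceProj M * M * (Mᵀ * M)⁻¹ * Mᵀ := by
        simp only [colSpaceProj, Matrix.mul_assoc]
    _ = colSpaceProj M := by rw [colSpaceProj_mul_self hM, colSpaceProj]

lemma dotProduct_colSpaceProj_mulVec (hM : IsUnit (Mᵀ * M)) (a : m → ℝ) :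
    a ⬝ᵥ (colSpaceProj M *ᵥ a) = (colSpaceProj M *ᵥ a) ⬝ᵥ (colSpaceProj M *ᵥ a) :=
  calc a ⬝ᵥ (colSpaceProj M *ᵥ a)
      = a ⬝ᵥ (colSpaceProj M *ᵥ (colSpaceProj M *ᵥ a)) := by
        rw [mulVec_mulVec, colSpaceProj_mul_colSpaceProj hM]
    _ = ((colSpaceProj M)ᵀ *ᵥ a) ⬝ᵥ (colSpaceProj M *ᵥ a) := by
        rw [transpose_mulVec_dotProduct]
    _ = _ := by rw [colSpaceProj_transpose]

lemma transpose_mulVec_dotProduct_eq_colSpaceProj (hM : IsUnit (Mᵀ * M)) (a : m → ℝ)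
    (x : n → ℝ) :
    (Mᵀ *ᵥ a) ⬝ᵥ x = (colSpaceProj M *ᵥ a) ⬝ᵥ (M *ᵥ x) :=
  calc (Mᵀ *ᵥ a) ⬝ᵥ x = a ⬝ᵥ ((colSpaceProj M * M) *ᵥ x) := by
        rw [transpose_mulVec_dotProduct, colSpaceProj_mul_self hM]
    _ = ((colSpaceProj M)ᵀ *ᵥ a) ⬝ᵥ (M *ᵥ x) := by
        rw [← mulVec_mulVec, transpose_mulVec_dotProduct]
    _ = _ := by rw [colSpaceProj_transpose]

lemma two_mul_dotProduct_sub_le_dotProduct_colSpaceProj (hM : IsUnit (Mᵀ * M)) (a : m → ℝ)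
    (x : n → ℝ) :
    2 * ((Mᵀ *ᵥ a) ⬝ᵥ x) - x ⬝ᵥ ((Mᵀ * M) *ᵥ x) ≤ a ⬝ᵥ (colSpaceProj M *ᵥ a) := by
  rw [transpose_mulVec_dotProduct_eq_colSpaceProj hM, ← mulVec_mulVec,
    dotProduct_transpose_mulVec, dotProduct_colSpaceProj_mulVec hM]
  exact two_mul_dotProduct_sub_dotProduct_self_le _ _

lemma isUnit_transpose_mul_self_add {k : Type*} [Fintype k] {M₁ : Matrix m n ℝ}
    (M₂ : Matrix k n ℝ) (h₁ : IsUnit (M₁ᵀ * M₁)) : IsUnit (M₁ᵀ * M₁ + M₂ᵀ * M₂) := by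
  have hpd₁ := (posSemidef_transpose_mul_self M₁).posDef_iff_isUnit.mpr h₁
  exact (hpd₁.add_posSemidef (posSemidef_transpose_mul_self M₂)).isUnit

end Matrix

theorem joint_projection_le_sum_of_projections_general
    (n₁ n₂ p : ℕ)
    (M₁ : Matrix (Fin n₁) (Fin p) ℝ) (M₂ : Matrix (Fin n₂) (Fin p) ℝ)
    (h₁ : IsUnit (M₁ᵀ * M₁)) (h₂ : IsUnit (M₂ᵀ * M₂))
    (a₁ : Fin n₁ → ℝ) (a₂ : Fin n₂ → ℝ) :
    IsUnit (M₁ᵀ * M₁ + M₂ᵀ * M₂) ∧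
      (M₁ᵀ *ᵥ a₁ + M₂ᵀ *ᵥ a₂) ⬝ᵥ ((M₁ᵀ * M₁ + M₂ᵀ * M₂)⁻¹ *ᵥ (M₁ᵀ *ᵥ a₁ + M₂ᵀ *ᵥ a₂))
        ≤ a₁ ⬝ᵥ ((M₁ * (M₁ᵀ * M₁)⁻¹ * M₁ᵀ) *ᵥ a₁)
          + a₂ ⬝ᵥ ((M₂ * (M₂ᵀ * M₂)⁻¹ * M₂ᵀ) *ᵥ a₂) := by
  have hS := isUnit_transpose_mul_self_add M₂ h₁
  refine ⟨hS, ?_⟩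
  set b := M₁ᵀ *ᵥ a₁ + M₂ᵀ *ᵥ a₂
  set x := (M₁ᵀ * M₁ + M₂ᵀ * M₂)⁻¹ *ᵥ b
  have hx : (M₁ᵀ * M₁ + M₂ᵀ * M₂) *ᵥ x = b := by
    rw [mulVec_mulVec, mul_nonsing_inv _ ((isUnit_iff_isUnit_det _).mp hS), one_mulVec]
  calc b ⬝ᵥ x = 2 * (b ⬝ᵥ x) - x ⬝ᵥ ((M₁ᵀ * M₁ + M₂ᵀ * M₂) *ᵥ x) := by
        rw [hx, dotProduct_comm x]; ring
    _ = (2 * ((M₁ᵀ *ᵥ a₁) ⬝ᵥ x) - x ⬝ᵥ ((M₁ᵀ * M₁) *ᵥ x))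
          + (2 * ((M₂ᵀ *ᵥ a₂) ⬝ᵥ x) - x ⬝ᵥ ((M₂ᵀ * M₂) *ᵥ x)) := by
        rw [add_mulVec, dotProduct_add, add_dotProduct]; ring
    _ ≤ _ := add_le_add (two_mul_dotProduct_sub_le_dotProduct_colSpaceProj h₁ a₁ x)
        (two_mul_dotProduct_sub_le_dotProduct_colSpaceProj h₂ a₂ x)

/-- The squared norm of the projection of the stacked vector `(a₁; a₂)` onto the column
space of the stacked matrix `(M₁; M₂)` is at most the sum of the squared norms of the
separate projections: inequality (ineq1) in the proof of Proposition 1. -/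
theorem joint_projection_le_sum_of_projections
    (n₁ n₂ p : ℕ) (hn₁ : 0 < n₁) (hn₂ : 0 < n₂) (hp : 0 < p)
    (M₁ : Matrix (Fin n₁) (Fin p) ℝ) (M₂ : Matrix (Fin n₂) (Fin p) ℝ)
    (h₁ : IsUnit (M₁ᵀ * M₁)) (h₂ : IsUnit (M₂ᵀ * M₂))
    (a₁ : Fin n₁ → ℝ) (a₂ : Fin n₂ → ℝ) :
    IsUnit (M₁ᵀ * M₁ + M₂ᵀ * M₂) ∧
      (M₁ᵀ *ᵥ a₁ + M₂ᵀ *ᵥ a₂) ⬝ᵥ ((M₁ᵀ * M₁ + M₂ᵀ * M₂)⁻¹ *ᵥ (M₁ᵀ *ᵥ a₁ + M₂ᵀ *ᵥ a₂))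
        ≤ a₁ ⬝ᵥ ((M₁ * (M₁ᵀ * M₁)⁻¹ * M₁ᵀ) *ᵥ a₁)
          + a₂ ⬝ᵥ ((M₂ * (M₂ᵀ * M₂)⁻¹ * M₂ᵀ) *ᵥ a₂) :=
  joint_projection_le_sum_of_projections_general n₁ n₂ p M₁ M₂ h₁ h₂ a₁ a₂
end

section
/- Let p be a positive integer, let V₁, V₂ be real orthogonal p×p matrices (V_iᵀV_i = I), let D₁, D₂ be invertible diagonal real p×p matrices, and set Ω = D₁⁻¹V₁ᵀV₂D₂ and S = V₁D₁²V₁ᵀ + V₂D₂²V₂ᵀ. Then S is positive definite (hence invertible), and D₁V₁ᵀ S⁻¹ V₁D₁ = (I + ΩΩᵀ)⁻¹ and D₂V₂ᵀ S⁻¹ V₂D₂ = (I + Ω⁻¹(Ω⁻¹)ᵀ)⁻¹. -/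
/-!
With `Bᵢ = VᵢDᵢ` (invertible, `Bᵢ⁻¹ = Dᵢ⁻¹Vᵢᵀ`) we have `S = B₁B₁ᵀ + B₂B₂ᵀ` and `Ω = B₁⁻¹B₂`,
`Ω⁻¹ = B₂⁻¹B₁`. Factoring `B₁` out gives `S = B₁(I + ΩΩᵀ)B₁ᵀ`, so
`B₁ᵀS⁻¹B₁ = (I + ΩΩᵀ)⁻¹`; the second identity is the same computation with the roles of the two
data sets exchanged. `S` is positive definite as the sum of the positive definite `B₁B₁ᵀ` and the
positive semidefinite `B₂B₂ᵀ`.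
-/

open Matrix

namespace Matrix

variable {n R : Type*} [Fintype n] [DecidableEq n]

section CommRing

variable [CommRing R]

theorem transpose_mul_inv_mul_mul_transpose_mul {B : Matrix n n R} (hB : IsUnit B)
    (C : Matrix n n R) : Bᵀ * (B * C * Bᵀ)⁻¹ * B = C⁻¹ := by
  have hB' : IsUnit B.det := (isUnit_iff_isUnit_det B).1 hB
  have hBT : IsUnit Bᵀ.det := by rwa [det_transpose]
  rw [mul_inv_rev, mul_inv_rev, ← Matrix.mul_assoc, ← Matrix.mul_assoc,
    mul_nonsing_inv _ hBT, Matrix.one_mul, Matrix.mul_assoc, nonsing_inv_mul _ hB',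
    Matrix.mul_one]

theorem mul_transpose_add_mul_transpose_eq {A : Matrix n n R} (hA : IsUnit A)
    (B : Matrix n n R) :
    A * Aᵀ + B * Bᵀ = A * (1 + A⁻¹ * B * (A⁻¹ * B)ᵀ) * Aᵀ := by
  have hAB : A * (A⁻¹ * B) = B := by
    rw [← Matrix.mul_assoc, mul_nonsing_inv _ ((isUnit_iff_isUnit_det A).1 hA), Matrix.one_mul]
  calc A * Aᵀ + B * Bᵀ = A * Aᵀ + A * (A⁻¹ * B) * (A * (A⁻¹ * B))ᵀ := by rw [hAB]
    _ = A * (1 + A⁻¹ * B * (A⁻¹ * B)ᵀ) * Aᵀ := by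
      simp only [transpose_mul, Matrix.mul_add, Matrix.add_mul, Matrix.mul_one, Matrix.mul_assoc]

theorem transpose_mul_inv_mul_transpose_add_mul_transpose_mul {A : Matrix n n R}
    (hA : IsUnit A) (B : Matrix n n R) :
    Aᵀ * (A * Aᵀ + B * Bᵀ)⁻¹ * A = (1 + A⁻¹ * B * (A⁻¹ * B)ᵀ)⁻¹ := by
  rw [mul_transpose_add_mul_transpose_eq hA, transpose_mul_inv_mul_mul_transpose_mul hA]

end CommRing

theorem PosDef.mul_transpose_add_mul_transpose [CommRing R] [PartialOrder R] [StarRing R]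
    [TrivialStar R] [StarOrderedRing R] [NoZeroDivisors R] {A : Matrix n n R} (hA : IsUnit A)
    (B : Matrix n n R) : (A * Aᵀ + B * Bᵀ).PosDef := by
  simpa only [conjTranspose_eq_transpose_of_trivial] using
    (PosDef.mul_conjTranspose_self A (vecMul_injective_of_isUnit hA)).add_posSemidef
      (posSemidef_self_mul_conjTranspose B)

theorem isUnit_mul_diagonal_of_transpose_mul_self {K : Type*} [Field K] {V : Matrix n n K}
    (hV : Vᵀ * V = 1) {d : n → K} (hd : ∀ i, d i ≠ 0) : IsUnit (V * diagonal d) :=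
  ((isUnit_iff_isUnit_det V).2 (isUnit_det_of_left_inverse hV)).mul
    (isUnit_diagonal.2 (Pi.isUnit_iff.2 fun i => (hd i).isUnit))

end Matrix

theorem svd_schur_identities_general
    (p : ℕ)
    (V₁ V₂ : Matrix (Fin p) (Fin p) ℝ)
    (hV₁ : V₁ᵀ * V₁ = 1) (hV₂ : V₂ᵀ * V₂ = 1)
    (d₁ d₂ : Fin p → ℝ) (hd₁ : ∀ i, d₁ i ≠ 0) (hd₂ : ∀ i, d₂ i ≠ 0) :
    let D₁ := Matrix.diagonal d₁
    let D₂ := Matrix.diagonal d₂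
    let Ωm := D₁⁻¹ * V₁ᵀ * V₂ * D₂
    let S := V₁ * D₁ ^ 2 * V₁ᵀ + V₂ * D₂ ^ 2 * V₂ᵀ
    S.PosDef ∧
      D₁ * V₁ᵀ * S⁻¹ * (V₁ * D₁) = (1 + Ωm * Ωmᵀ)⁻¹ ∧
      D₂ * V₂ᵀ * S⁻¹ * (V₂ * D₂) = (1 + Ωm⁻¹ * (Ωm⁻¹)ᵀ)⁻¹ := by
  intro D₁ D₂ Ωm S
  set B₁ := V₁ * D₁
  set B₂ := V₂ * D₂
  have hB₁ : IsUnit B₁ := isUnit_mul_diagonal_of_transpose_mul_self hV₁ hd₁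
  have hB₂ : IsUnit B₂ := isUnit_mul_diagonal_of_transpose_mul_self hV₂ hd₂
  have hS : S = B₁ * B₁ᵀ + B₂ * B₂ᵀ := by
    simp only [S, B₁, B₂, D₁, D₂, transpose_mul, diagonal_transpose, sq, Matrix.mul_assoc]
  have hΩ : Ωm = B₁⁻¹ * B₂ := by
    rw [Matrix.mul_inv_rev, inv_eq_left_inv hV₁]
    simp only [Ωm, B₂, Matrix.mul_assoc]
  have hΩinv : Ωm⁻¹ = B₂⁻¹ * B₁ := by
    rw [hΩ, Matrix.mul_inv_rev, nonsing_inv_nonsing_inv _ ((isUnit_iff_isUnit_det B₁).1 hB₁)]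
  have hB₁T : D₁ * V₁ᵀ = B₁ᵀ := by simp [B₁, D₁]
  have hB₂T : D₂ * V₂ᵀ = B₂ᵀ := by simp [B₂, D₂]
  refine ⟨hS ▸ PosDef.mul_transpose_add_mul_transpose hB₁ B₂, ?_, ?_⟩
  · rw [hB₁T, hS, hΩ, transpose_mul_inv_mul_transpose_add_mul_transpose_mul hB₁]
  · rw [hB₂T, hS, add_comm, hΩinv, transpose_mul_inv_mul_transpose_add_mul_transpose_mul hB₂]

/-- The first and second matrix identities in the proof of Proposition 1:
with `Ω = D₁⁻¹V₁ᵀV₂D₂` and `S = V₁D₁²V₁ᵀ + V₂D₂²V₂ᵀ`, the matrix `S` is positive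
definite and `D₁V₁ᵀ S⁻¹ V₁D₁ = (I + ΩΩᵀ)⁻¹`, `D₂V₂ᵀ S⁻¹ V₂D₂ = (I + Ω⁻¹(Ω⁻¹)ᵀ)⁻¹`. -/
theorem svd_schur_identities
    (p : ℕ) (hp : 0 < p)
    (V₁ V₂ : Matrix (Fin p) (Fin p) ℝ)
    (hV₁ : V₁ᵀ * V₁ = 1) (hV₂ : V₂ᵀ * V₂ = 1)
    (d₁ d₂ : Fin p → ℝ) (hd₁ : ∀ i, d₁ i ≠ 0) (hd₂ : ∀ i, d₂ i ≠ 0) :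
    let D₁ := Matrix.diagonal d₁
    let D₂ := Matrix.diagonal d₂
    let Ωm := D₁⁻¹ * V₁ᵀ * V₂ * D₂
    let S := V₁ * D₁ ^ 2 * V₁ᵀ + V₂ * D₂ ^ 2 * V₂ᵀ
    S.PosDef ∧
      D₁ * V₁ᵀ * S⁻¹ * (V₁ * D₁) = (1 + Ωm * Ωmᵀ)⁻¹ ∧
      D₂ * V₂ᵀ * S⁻¹ * (V₂ * D₂) = (1 + Ωm⁻¹ * (Ωm⁻¹)ᵀ)⁻¹ :=
  svd_schur_identities_general p V₁ V₂ hV₁ hV₂ d₁ d₂ hd₁ hd₂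
end

section
/- Let p be a positive integer, let Ω be an invertible real p×p matrix, and let u, v ∈ ℝ^p. Then uᵀ(I + ΩΩᵀ)⁻¹u + vᵀ(I + Ω⁻¹(Ω⁻¹)ᵀ)⁻¹v + 2 uᵀ(Ω⁻¹ + Ωᵀ)⁻¹v ≤ uᵀu + vᵀv. -/
open Matrix

lemma dot_two_mul_le (p : ℕ) (a b : Fin p → ℝ) : 2 * (a ⬝ᵥ b) ≤ a ⬝ᵥ a + b ⬝ᵥ b := by
  simp only [dotProduct, Finset.mul_sum, ← Finset.sum_add_distrib]
  exact Finset.sum_le_sum fun i _ => by nlinarith [sq_nonneg (a i - b i)]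

lemma dot_mulVec_helper (p : ℕ) (M : Matrix (Fin p) (Fin p) ℝ) (a b : Fin p → ℝ) :
    a ⬝ᵥ (M *ᵥ b) = (Mᵀ *ᵥ a) ⬝ᵥ b := by
  rw [dotProduct_mulVec, mulVec_transpose]

/-- The reduced quadratic-form inequality in the proof of Proposition 1:
for invertible `Ω`, `uᵀ(I + ΩΩᵀ)⁻¹u + vᵀ(I + Ω⁻¹(Ω⁻¹)ᵀ)⁻¹v + 2uᵀ(Ω⁻¹ + Ωᵀ)⁻¹v ≤ uᵀu + vᵀv`. -/
theorem reduced_quadratic_form_inequality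
    (p : ℕ) (hp : 0 < p)
    (Ωm : Matrix (Fin p) (Fin p) ℝ) (hΩ : IsUnit Ωm)
    (u v : Fin p → ℝ) :
    u ⬝ᵥ ((1 + Ωm * Ωmᵀ)⁻¹ *ᵥ u) + v ⬝ᵥ ((1 + Ωm⁻¹ * (Ωm⁻¹)ᵀ)⁻¹ *ᵥ v)
        + 2 * (u ⬝ᵥ ((Ωm⁻¹ + Ωmᵀ)⁻¹ *ᵥ v))
      ≤ u ⬝ᵥ u + v ⬝ᵥ v := by
  have hd : IsUnit Ωm.det := (isUnit_iff_isUnit_det Ωm).mp hΩ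
  have hinv : Ωm⁻¹ * Ωm = 1 := nonsing_inv_mul Ωm hd
  have hinv' : Ωm * Ωm⁻¹ = 1 := mul_nonsing_inv Ωm hd
  set A : Matrix (Fin p) (Fin p) ℝ := 1 + Ωm * Ωmᵀ with hAdef
  -- A is positive definite, hence invertible
  have hApd : A.PosDef := by
    have h1 : (1 : Matrix (Fin p) (Fin p) ℝ).PosDef := Matrix.PosDef.one
    have h2 : (Ωm * Ωmᵀ).PosSemidef := by
      simpa using posSemidef_self_mul_conjTranspose Ωm
    exact h1.add_posSemidef h2
  have hAunit : IsUnit A.det := isUnit_iff_ne_zero.mpr hApd.det_pos.ne'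
  have hAinv : A⁻¹ * A = 1 := nonsing_inv_mul A hAunit
  have hAinv' : A * A⁻¹ = 1 := mul_nonsing_inv A hAunit
  have hAsymm : Aᵀ = A := by
    have := hApd.isHermitian
    simpa [IsHermitian] using this
  have hAisymm : (A⁻¹)ᵀ = A⁻¹ := by
    rw [transpose_nonsing_inv, hAsymm]
  -- (Ωm⁻¹ + Ωmᵀ)⁻¹ = A⁻¹ * Ωm
  have key1 : (Ωm⁻¹ + Ωmᵀ)⁻¹ = A⁻¹ * Ωm := by
    have h : Ωm⁻¹ + Ωmᵀ = Ωm⁻¹ * A := by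
      rw [hAdef, Matrix.mul_add, mul_one, ← Matrix.mul_assoc, hinv, Matrix.one_mul]
    rw [h, Matrix.mul_inv_rev, nonsing_inv_nonsing_inv Ωm hd]
  -- (1 + Ωm⁻¹ * (Ωm⁻¹)ᵀ)⁻¹ = Ωmᵀ * A⁻¹ * Ωm
  have key2 : (1 + Ωm⁻¹ * (Ωm⁻¹)ᵀ)⁻¹ = Ωmᵀ * A⁻¹ * Ωm := by
    have h : Ωm⁻¹ * A * (Ωm⁻¹)ᵀ = 1 + Ωm⁻¹ * (Ωm⁻¹)ᵀ := by
      rw [hAdef, Matrix.mul_add, mul_one, Matrix.add_mul,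
        ← Matrix.mul_assoc Ωm⁻¹ Ωm Ωmᵀ, hinv, Matrix.one_mul,
        ← transpose_mul, hinv, transpose_one, add_comm]
    rw [← h, Matrix.mul_inv_rev, Matrix.mul_inv_rev, nonsing_inv_nonsing_inv Ωm hd,
      ← transpose_nonsing_inv, nonsing_inv_nonsing_inv Ωm hd, Matrix.mul_assoc]
  rw [key1, key2]
  -- Let x = u + Ωv, w = A⁻¹ x
  set x : Fin p → ℝ := u + Ωm *ᵥ v with hx
  set w : Fin p → ℝ := A⁻¹ *ᵥ x with hw
  have hAw : A *ᵥ w = x := by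
    rw [hw, mulVec_mulVec, hAinv', one_mulVec]
  -- LHS = x ⬝ᵥ w
  have hLHS : u ⬝ᵥ (A⁻¹ *ᵥ u) + v ⬝ᵥ ((Ωmᵀ * A⁻¹ * Ωm) *ᵥ v)
      + 2 * (u ⬝ᵥ ((A⁻¹ * Ωm) *ᵥ v)) = x ⬝ᵥ w := by
    have hcross : (Ωm *ᵥ v) ⬝ᵥ (A⁻¹ *ᵥ u) = u ⬝ᵥ ((A⁻¹ * Ωm) *ᵥ v) := by
      rw [dotProduct_comm, dot_mulVec_helper p Ωm, dot_mulVec_helper p (A⁻¹ * Ωm),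
        mulVec_mulVec, transpose_mul, hAisymm]
    have hterm2 : v ⬝ᵥ ((Ωmᵀ * A⁻¹ * Ωm) *ᵥ v) = (Ωm *ᵥ v) ⬝ᵥ (A⁻¹ *ᵥ (Ωm *ᵥ v)) := by
      rw [mulVec_mulVec, dot_mulVec_helper p (A⁻¹ * Ωm), mulVec_mulVec,
        dot_mulVec_helper p (Ωmᵀ * A⁻¹ * Ωm), transpose_mul, transpose_mul, hAisymm,
        transpose_transpose, transpose_mul, hAisymm, Matrix.mul_assoc]
    rw [hterm2, hw, hx]
    simp only [mulVec_add, dotProduct_add, add_dotProduct, mulVec_mulVec]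
    rw [hcross]
    ring
  rw [hLHS]
  -- x ⬝ᵥ w = w ⬝ᵥ (A *ᵥ w) = w⬝w + (Ωᵀw)⬝(Ωᵀw)
  have hxw : x ⬝ᵥ w = w ⬝ᵥ w + (Ωmᵀ *ᵥ w) ⬝ᵥ (Ωmᵀ *ᵥ w) := by
    rw [← hAw, dotProduct_comm (A *ᵥ w) w, hAdef]
    simp only [add_mulVec, one_mulVec, dotProduct_add]
    congr 1
    rw [← mulVec_mulVec, dot_mulVec_helper p Ωm]
  -- x ⬝ᵥ w = u ⬝ᵥ w + v ⬝ᵥ (Ωᵀ w)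
  have hxw2 : x ⬝ᵥ w = u ⬝ᵥ w + v ⬝ᵥ (Ωmᵀ *ᵥ w) := by
    rw [hx]
    simp only [add_dotProduct]
    congr 1
    rw [dotProduct_comm, dot_mulVec_helper p Ωm, dotProduct_comm]
  have h1 := dot_two_mul_le p u w
  have h2 := dot_two_mul_le p v (Ωmᵀ *ᵥ w)
  nlinarith [hxw, hxw2]
end

section
/- There exist symmetric positive definite real 2×2 matrices P₁, P₂ and vectors β₁, β₂ ∈ ℝ² such that the first coordinate of the inverse-variance-weighted combination (P₁ + P₂)⁻¹(P₁β₁ + P₂β₂) is strictly smaller than both the first coordinate of β₁ and the first coordinate of β₂; that is, the federated coefficient from inverse variance weighting can lie strictly outside the interval spanned by the two individual coefficients. -/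
/-!
Take `P₁ = !![1, -1; -1, 2]`, `P₂ = !![1, 1; 1, 2]`, `β₁ = (0, 1)` and `β₂ = 0`. Both precision
matrices are positive definite by the 2 × 2 determinant criterion, and their off-diagonal entries
cancel, so `P₁ + P₂ = diag(2, 4)` and the combination is `P₁β₁ / (2, 4) = (-1/2, 1/2)`. The
negative coupling in `P₁` lets the disagreement in the second coordinate drag the first coordinate
below the common value `0`.
-/

open Matrix

theorem Matrix.inv_diagonal_mulVec_apply {n K : Type*} [Fintype n] [DecidableEq n] [Field K]
    {d : n → K} (hd : ∀ i, d i ≠ 0) (v : n → K) (i : n) :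
    ((diagonal d)⁻¹ *ᵥ v) i = v i / d i := by
  have hinv : (diagonal d)⁻¹ = diagonal d⁻¹ :=
    inv_eq_left_inv <| by rw [diagonal_mul_diagonal, ← diagonal_one]; congr 1; ext j; simp [hd j]
  rw [hinv, mulVec_diagonal, Pi.inv_apply, div_eq_inv_mul]

theorem Matrix.posDef_fin_two_of_pos {K : Type*} [Field K] [LinearOrder K] [IsStrictOrderedRing K]
    [StarRing K] [TrivialStar K] {a b c : K} (ha : 0 < a) (hdet : 0 < a * c - b * b) :
    (!![a, b; b, c]).PosDef := by
  refine PosDef.of_dotProduct_mulVec_pos ?_ fun x hx ↦ ?_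
  · ext i j
    fin_cases i <;> fin_cases j <;> simp
  · have hQ : a * (star x ⬝ᵥ (!![a, b; b, c] *ᵥ x)) =
        (a * x 0 + b * x 1) ^ 2 + (a * c - b * b) * x 1 ^ 2 := by
      simp only [star_trivial, dotProduct, Fin.sum_univ_two, cons_mulVec, cons_val_zero,
        cons_val_one]
      ring
    refine pos_of_mul_pos_right (hQ ▸ ?_) ha.le
    by_cases h1 : x 1 = 0
    · have h0 : x 0 ≠ 0 := fun h0 ↦ hx (funext fun i ↦ by fin_cases i <;> simp [h0, h1])
      simpa [h1] using sq_pos_of_ne_zero (mul_ne_zero ha.ne' h0)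
    · positivity

/-- **IVW can leave the interval spanned by the individual coefficients.** There exist
symmetric positive definite 2×2 precision matrices `P₁, P₂` and coefficient vectors
`β₁, β₂` such that the first coordinate of `(P₁ + P₂)⁻¹(P₁β₁ + P₂β₂)` is strictly
smaller than the first coordinates of both `β₁` and `β₂`. -/
theorem ivw_coefficient_can_lie_outside_interval :
    ∃ (P₁ P₂ : Matrix (Fin 2) (Fin 2) ℝ) (β₁ β₂ : Fin 2 → ℝ),
      P₁.PosDef ∧ P₂.PosDef ∧
      ((P₁ + P₂)⁻¹ *ᵥ (P₁ *ᵥ β₁ + P₂ *ᵥ β₂)) 0 < β₁ 0 ∧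
      ((P₁ + P₂)⁻¹ *ᵥ (P₁ *ᵥ β₁ + P₂ *ᵥ β₂)) 0 < β₂ 0 := by
  have hsum : (!![1, -1; -1, 2] + !![1, 1; 1, 2] : Matrix (Fin 2) (Fin 2) ℝ) =
      diagonal ![2, 4] := by
    rw [diagonal_fin_two]; norm_num
  have hcoord : ((diagonal ![2, 4])⁻¹ *ᵥ
      (!![1, -1; -1, 2] *ᵥ ![0, 1] + !![1, 1; 1, 2] *ᵥ ![0, 0])) 0 = (-1 / 2 : ℝ) := by
    rw [inv_diagonal_mulVec_apply (by simp [Fin.forall_fin_two])]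
    norm_num
  refine ⟨!![1, -1; -1, 2], !![1, 1; 1, 2], ![0, 1], ![0, 0],
    posDef_fin_two_of_pos (by norm_num) (by norm_num),
    posDef_fin_two_of_pos (by norm_num) (by norm_num), ?_, ?_⟩ <;>
  · rw [hsum, hcoord]; norm_num
end

section
/- On a probability space, let X be a random covariate taking values in a measurable space 𝒳, W a {0,1}-valued treatment indicator, and Y(0), Y(1) integrable real-valued potential outcomes with observed outcome Y = W·Y(1) + (1−W)·Y(0); assume the pair (Y(0), Y(1)) is conditionally independent of W given σ(X). Suppose μ₀, μ₁ : 𝒳 → ℝ are measurable functions such that μ₀(X) and μ₁(X) are versions of the conditional expectations E[Y(0) | σ(X)] and E[Y(1) | σ(X)], respectively, and let ẽ : 𝒳 → ℝ be any measurable function with η ≤ ẽ(x) ≤ 1 − η for all x ∈ 𝒳 and some η ∈ (0, 1/2) (ẽ need not be the true propensity). Then E[ μ₁(X) − μ₀(X) + W·(Y − μ₁(X)) / ẽ(X) − (1 − W)·(Y − μ₀(X)) / (1 − ẽ(X)) ] = E[Y(1) − Y(0)]. -/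
open MeasureTheory ProbabilityTheory

/-! Weighted by a bounded function `g` of `X` and restricted to an arm `{W = a}`, the outcome
residual `Y(a) − mₐ(X)` has mean zero, so the AIPW score has the same mean as `m₁(X) − m₀(X)`,
which is `E[Y(1) − Y(0)]` by the tower property. The residual identity is the factorisation
`E[1{W = a} Y(a) | X] = P(W = a | X) E[Y(a) | X]`. Conditional independence gives it for
indicators of events of `(Y(0), Y(1))`: the bounded function `g (1{W = a} − P(W = a | X))`
integrates to zero over every such event, hence is orthogonal to every integrable function of
`(Y(0), Y(1))`. -/

theorem Real.norm_inv_le_inv_of_le {a b : ℝ} (ha : 0 < a) (hab : a ≤ b) : ‖b⁻¹‖ ≤ a⁻¹ := by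
  rw [norm_inv, Real.norm_of_nonneg (ha.trans_le hab).le]
  exact inv_anti₀ ha hab

namespace MeasureTheory

variable {Ω : Type*} {m mΩ : MeasurableSpace Ω} {μ : Measure Ω}

theorem integral_mul_condExp (hm : m ≤ mΩ) [SigmaFinite (μ.trim hm)] {f g : Ω → ℝ}
    (hg : StronglyMeasurable[m] g) (hgf : Integrable (fun ω => g ω * f ω) μ)
    (hf : Integrable f μ) :
    ∫ ω, g ω * μ[f|m] ω ∂μ = ∫ ω, g ω * f ω ∂μ :=
  (integral_congr_ae (condExp_mul_of_stronglyMeasurable_left hg hgf hf)).symm.trans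
    (integral_condExp hm)

theorem integral_mul_eq_zero_of_forall_setIntegral_eq_zero [IsFiniteMeasure μ] (hm : m ≤ mΩ)
    {f k : Ω → ℝ} {C : ℝ} (hk : AEStronglyMeasurable k μ) (hkC : ∀ᵐ ω ∂μ, ‖k ω‖ ≤ C)
    (hk0 : ∀ s, MeasurableSet[m] s → ∫ ω in s, k ω ∂μ = 0)
    (hf : StronglyMeasurable[m] f) (hfi : Integrable f μ) :
    ∫ ω, f ω * k ω ∂μ = 0 := by
  have hki : Integrable k μ := .of_bound hk C hkC
  have hc : 0 =ᵐ[μ] μ[k|m] :=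
    ae_eq_condExp_of_forall_setIntegral_eq hm hki (fun _ _ _ => integrableOn_zero)
      (fun s hs _ => by simp [hk0 s hs]) aestronglyMeasurable_zero
  rw [← integral_mul_condExp hm hf (hfi.mul_bdd hk hkC) hki]
  refine integral_eq_zero_of_ae ?_
  filter_upwards [hc] with ω hω
  simp [← hω]

theorem ae_norm_condExp_indicator_le_one {s : Set Ω} : ∀ᵐ ω ∂μ, ‖(μ⟦s|m⟧) ω‖ ≤ 1 :=
  ae_bdd_abs_condExp_of_ae_bdd_abs
    (ae_of_all _ fun _ => (norm_indicator_le_norm_self (fun _ => (1 : ℝ)) _).trans norm_one.le)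

theorem integral_mul_indicator_condExp [IsFiniteMeasure μ] (hm : m ≤ mΩ) {A : Set Ω}
    (hA : MeasurableSet A) {f g : Ω → ℝ} (hfi : Integrable f μ) (hg : StronglyMeasurable[m] g)
    {c : ℝ} (hgc : ∀ ω, ‖g ω‖ ≤ c) :
    ∫ ω, g ω * A.indicator (μ[f|m]) ω ∂μ = ∫ ω, g ω * (μ⟦A|m⟧) ω * f ω ∂μ := by
  have hind : (fun ω => g ω * A.indicator (μ[f|m]) ω)
      = fun ω => g ω * μ[f|m] ω * A.indicator (fun _ => (1 : ℝ)) ω := by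
    ext ω
    by_cases hω : ω ∈ A <;> simp [hω]
  have hgAc : Integrable (fun ω => g ω * A.indicator (μ[f|m]) ω) μ :=
    (integrable_condExp.indicator hA).bdd_mul (hg.mono hm).aestronglyMeasurable (ae_of_all _ hgc)
  have hgpf : Integrable (fun ω => g ω * (μ⟦A|m⟧) ω * f ω) μ :=
    hfi.bdd_mul ((hg.mul stronglyMeasurable_condExp).mono hm).aestronglyMeasurable
      (ae_norm_condExp_indicator_le_one.mono fun ω hω => norm_mul_le_of_le (hgc ω) hω)
  calc ∫ ω, g ω * A.indicator (μ[f|m]) ω ∂μ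
      = ∫ ω, g ω * μ[f|m] ω * A.indicator (fun _ => (1 : ℝ)) ω ∂μ := by rw [hind]
    _ = ∫ ω, g ω * μ[f|m] ω * (μ⟦A|m⟧) ω ∂μ :=
        (integral_mul_condExp hm (hg.mul stronglyMeasurable_condExp) (hind ▸ hgAc)
          ((integrable_const 1).indicator hA)).symm
    _ = ∫ ω, g ω * (μ⟦A|m⟧) ω * μ[f|m] ω ∂μ := by
        congr 1 with ω
        ring
    _ = ∫ ω, g ω * (μ⟦A|m⟧) ω * f ω ∂μ :=
        integral_mul_condExp hm (hg.mul stronglyMeasurable_condExp) hgpf hfi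

end MeasureTheory

namespace ProbabilityTheory

variable {Ω : Type*} {m m₁ m₂ mΩ : MeasurableSpace Ω} [StandardBorelSpace Ω]
  {μ : Measure Ω} [IsFiniteMeasure μ] {hm : m ≤ mΩ} {A : Set Ω} {g : Ω → ℝ} {c : ℝ}

theorem CondIndep.setIntegral_mul_indicator_sub_condExp_eq_zero (hCI : CondIndep m m₁ m₂ hm μ)
    (hm₁ : m₁ ≤ mΩ) (hm₂ : m₂ ≤ mΩ) (hA : MeasurableSet[m₂] A) (hg : StronglyMeasurable[m] g)
    (hgc : ∀ ω, ‖g ω‖ ≤ c) {s : Set Ω} (hs : MeasurableSet[m₁] s) :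
    ∫ ω in s, g ω * (A.indicator (fun _ => (1 : ℝ)) ω - (μ⟦A|m⟧) ω) ∂μ = 0 := by
  have hs' : MeasurableSet s := hm₁ _ hs
  have hsA : MeasurableSet (s ∩ A) := hs'.inter (hm₂ _ hA)
  have hg' : AEStronglyMeasurable g μ := (hg.mono hm).aestronglyMeasurable
  have hgpc : ∀ᵐ ω ∂μ, ‖g ω * (μ⟦A|m⟧) ω‖ ≤ c * 1 :=
    ae_norm_condExp_indicator_le_one.mono fun ω hω => norm_mul_le_of_le (hgc ω) hω
  have hgp : AEStronglyMeasurable (fun ω => g ω * (μ⟦A|m⟧) ω) μ :=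
    ((hg.mul stronglyMeasurable_condExp).mono hm).aestronglyMeasurable
  have hsA_int := ((integrable_const (1 : ℝ)).indicator hsA).bdd_mul hg' (ae_of_all _ hgc)
  have hs_int := ((integrable_const (1 : ℝ)).indicator hs').bdd_mul hgp hgpc
  have hinter : ∫ ω, g ω * (s ∩ A).indicator (fun _ => (1 : ℝ)) ω ∂μ
      = ∫ ω, g ω * (μ⟦A|m⟧) ω * s.indicator (fun _ => (1 : ℝ)) ω ∂μ :=
    calc ∫ ω, g ω * (s ∩ A).indicator (fun _ => (1 : ℝ)) ω ∂μ
        = ∫ ω, g ω * (μ⟦s ∩ A|m⟧) ω ∂μ :=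
          (integral_mul_condExp hm hg hsA_int ((integrable_const 1).indicator hsA)).symm
      _ = ∫ ω, g ω * (μ⟦A|m⟧) ω * (μ⟦s|m⟧) ω ∂μ := by
          refine integral_congr_ae ?_
          filter_upwards [(condIndep_iff m m₁ m₂ hm hm₁ hm₂ μ).1 hCI s A hs hA] with ω hω
          rw [hω, Pi.mul_apply]
          ring
      _ = ∫ ω, g ω * (μ⟦A|m⟧) ω * s.indicator (fun _ => (1 : ℝ)) ω ∂μ :=
          integral_mul_condExp hm (hg.mul stronglyMeasurable_condExp) hs_int
            ((integrable_const 1).indicator hs')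
  rw [← integral_indicator hs', ← sub_eq_zero_of_eq hinter, ← integral_sub hsA_int hs_int]
  congr 1 with ω
  by_cases hωs : ω ∈ s <;> by_cases hωA : ω ∈ A <;> simp [hωs, hωA, mul_sub]

theorem CondIndep.integral_mul_indicator_sub_eq_zero (hCI : CondIndep m m₁ m₂ hm μ)
    (hm₁ : m₁ ≤ mΩ) (hm₂ : m₂ ≤ mΩ) (hA : MeasurableSet[m₂] A) {f : Ω → ℝ}
    (hf : StronglyMeasurable[m₁] f) (hfi : Integrable f μ) (hg : StronglyMeasurable[m] g)
    (hgc : ∀ ω, ‖g ω‖ ≤ c) {φ : Ω → ℝ} (hφ : μ[f|m] =ᵐ[μ] φ) :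
    ∫ ω, g ω * A.indicator (f - φ) ω ∂μ = 0 := by
  have hA' : MeasurableSet A := hm₂ _ hA
  have hg' : AEStronglyMeasurable g μ := (hg.mono hm).aestronglyMeasurable
  have hp := stronglyMeasurable_condExp (f := A.indicator fun _ => (1 : ℝ)) (m := m) (μ := μ)
  have hgpc : ∀ᵐ ω ∂μ, ‖g ω * (μ⟦A|m⟧) ω‖ ≤ c * 1 :=
    ae_norm_condExp_indicator_le_one.mono fun ω hω => norm_mul_le_of_le (hgc ω) hω
  have hgpf : Integrable (fun ω => g ω * (μ⟦A|m⟧) ω * f ω) μ :=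
    hfi.bdd_mul ((hg.mul hp).mono hm).aestronglyMeasurable hgpc
  have hgAf : Integrable (fun ω => g ω * A.indicator f ω) μ :=
    (hfi.indicator hA').bdd_mul hg' (ae_of_all _ hgc)
  have hres : ∫ ω, f ω * (g ω * (A.indicator (fun _ => (1 : ℝ)) ω - (μ⟦A|m⟧) ω)) ∂μ = 0 :=
    integral_mul_eq_zero_of_forall_setIntegral_eq_zero hm₁
      (hg'.mul (((stronglyMeasurable_const.indicator hA').sub (hp.mono hm)).aestronglyMeasurable))
      (ae_norm_condExp_indicator_le_one.mono fun ω hω => norm_mul_le_of_le (hgc ω)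
        ((norm_sub_le _ _).trans (add_le_add (norm_indicator_le_norm_self _ _) hω)))
      (fun s hs => hCI.setIntegral_mul_indicator_sub_condExp_eq_zero hm₁ hm₂ hA hg hgc hs) hf hfi
  calc ∫ ω, g ω * A.indicator (f - φ) ω ∂μ
      = ∫ ω, g ω * A.indicator (f - μ[f|m]) ω ∂μ :=
        integral_congr_ae (hφ.mono fun ω hω => by by_cases h : ω ∈ A <;> simp [h, hω])
    _ = ∫ ω, g ω * A.indicator f ω ∂μ - ∫ ω, g ω * (μ⟦A|m⟧) ω * f ω ∂μ := by
        rw [← integral_mul_indicator_condExp hm hA' hfi hg hgc, ← integral_sub hgAf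
          ((integrable_condExp.indicator hA').bdd_mul hg' (ae_of_all _ hgc))]
        congr 1 with ω
        by_cases hω : ω ∈ A <;> simp [hω, mul_sub]
    _ = 0 := by
        rw [← integral_sub hgAf hgpf, ← hres]
        congr 1 with ω
        by_cases hω : ω ∈ A <;> simp [hω] <;> ring

end ProbabilityTheory

theorem aipw_unbiased_when_outcome_models_correct_general
    {Ω : Type*} [MeasurableSpace Ω] [StandardBorelSpace Ω]
    {𝒳 : Type*} [MeasurableSpace 𝒳]
    (μ : Measure Ω) [IsProbabilityMeasure μ]
    (X : Ω → 𝒳) (hX : Measurable X)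
    (W : Ω → ℝ) (hWm : Measurable W) (hW01 : ∀ ω, W ω = 0 ∨ W ω = 1)
    (Y0 Y1 : Ω → ℝ) (hY0m : Measurable Y0) (hY1m : Measurable Y1)
    (hY0i : Integrable Y0 μ) (hY1i : Integrable Y1 μ)
    (Y : Ω → ℝ) (hY : ∀ ω, Y ω = W ω * Y1 ω + (1 - W ω) * Y0 ω)
    (hunconf : CondIndepFun (MeasurableSpace.comap X inferInstance) hX.comap_le
      (fun ω => (Y0 ω, Y1 ω)) W μ)
    (m₀ m₁ : 𝒳 → ℝ)
    (hm₀v : μ[Y0 | MeasurableSpace.comap X inferInstance] =ᵐ[μ] fun ω => m₀ (X ω))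
    (hm₁v : μ[Y1 | MeasurableSpace.comap X inferInstance] =ᵐ[μ] fun ω => m₁ (X ω))
    (etil : 𝒳 → ℝ) (hetil : Measurable etil)
    (η : ℝ) (hη0 : 0 < η)
    (hovl : ∀ x, η ≤ etil x ∧ etil x ≤ 1 - η) :
    ∫ ω, (m₁ (X ω) - m₀ (X ω) + W ω * (Y ω - m₁ (X ω)) / etil (X ω)
        - (1 - W ω) * (Y ω - m₀ (X ω)) / (1 - etil (X ω))) ∂μ
      = ∫ ω, (Y1 ω - Y0 ω) ∂μ := by
  have hCI := (condIndepFun_iff_condIndep _ _ _ _ _).1 hunconf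
  set mX : MeasurableSpace Ω := MeasurableSpace.comap X inferInstance
  have hXm : Measurable[mX] X := comap_measurable X
  have hw₁ : StronglyMeasurable[mX] fun ω => (etil (X ω))⁻¹ :=
    (hetil.comp hXm).inv.stronglyMeasurable
  have hw₀ : StronglyMeasurable[mX] fun ω => (1 - etil (X ω))⁻¹ :=
    (measurable_const.sub (hetil.comp hXm)).inv.stronglyMeasurable
  have hw₁c (ω : Ω) : ‖(etil (X ω))⁻¹‖ ≤ η⁻¹ := Real.norm_inv_le_inv_of_le hη0 (hovl (X ω)).1
  have hw₀c (ω : Ω) : ‖(1 - etil (X ω))⁻¹‖ ≤ η⁻¹ :=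
    Real.norm_inv_le_inv_of_le hη0 (by linarith [hovl (X ω)])
  have hm₁i : Integrable (fun ω => m₁ (X ω)) μ := integrable_condExp.congr hm₁v
  have hm₀i : Integrable (fun ω => m₀ (X ω)) μ := integrable_condExp.congr hm₀v
  have h₁ := hCI.integral_mul_indicator_sub_eq_zero (f := Y1) (hY0m.prodMk hY1m).comap_le
    hWm.comap_le ⟨{1}, measurableSet_singleton 1, rfl⟩
    (measurable_snd.comp (comap_measurable _)).stronglyMeasurable hY1i hw₁ hw₁c hm₁v
  have h₀ := hCI.integral_mul_indicator_sub_eq_zero (f := Y0) (hY0m.prodMk hY1m).comap_le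
    hWm.comap_le ⟨{0}, measurableSet_singleton 0, rfl⟩
    (measurable_fst.comp (comap_measurable _)).stronglyMeasurable hY0i hw₀ hw₀c hm₀v
  have hT₁ := ((hY1i.sub hm₁i).indicator (hWm (measurableSet_singleton 1))).bdd_mul
    (hw₁.mono hX.comap_le).aestronglyMeasurable (ae_of_all _ hw₁c)
  have hT₀ := ((hY0i.sub hm₀i).indicator (hWm (measurableSet_singleton 0))).bdd_mul
    (hw₀.mono hX.comap_le).aestronglyMeasurable (ae_of_all _ hw₀c)
  calc _ = ∫ ω, (m₁ (X ω) - m₀ (X ω)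
          + (etil (X ω))⁻¹ * (W ⁻¹' {1}).indicator (Y1 - fun ω => m₁ (X ω)) ω
          - (1 - etil (X ω))⁻¹ * (W ⁻¹' {0}).indicator (Y0 - fun ω => m₀ (X ω)) ω) ∂μ := by
        congr 1 with ω
        rcases hW01 ω with h | h <;> simp [hY, h, div_eq_inv_mul]
    _ = ∫ ω, (m₁ (X ω) - m₀ (X ω)) ∂μ := by
        rw [integral_sub ?_ hT₀, integral_add ?_ hT₁, h₁, h₀, add_zero, sub_zero]
        exacts [hm₁i.sub hm₀i, (hm₁i.sub hm₀i).add hT₁]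
    _ = ∫ ω, (Y1 ω - Y0 ω) ∂μ := by
        rw [integral_sub hm₁i hm₀i, integral_sub hY1i hY0i, ← integral_congr_ae hm₁v,
          ← integral_congr_ae hm₀v, integral_condExp hX.comap_le, integral_condExp hX.comap_le]

/-- **Double robustness of AIPW, outcome side.** Under unconfoundedness, if
`m₀(X), m₁(X)` are versions of the true conditional means `E[Y(0)|σ(X)], E[Y(1)|σ(X)]`
and `ẽ : 𝒳 → ℝ` is any measurable function with η-overlap (not required to be the true
propensity), then the AIPW score is unbiased for the ATE:
`E[m₁(X) − m₀(X) + W(Y − m₁(X))/ẽ(X) − (1−W)(Y − m₀(X))/(1−ẽ(X))] = E[Y(1) − Y(0)]`. -/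
theorem aipw_unbiased_when_outcome_models_correct
    {Ω : Type*} [MeasurableSpace Ω] [StandardBorelSpace Ω] [Nonempty Ω]
    {𝒳 : Type*} [MeasurableSpace 𝒳]
    (μ : Measure Ω) [IsProbabilityMeasure μ]
    (X : Ω → 𝒳) (hX : Measurable X)
    (W : Ω → ℝ) (hWm : Measurable W) (hW01 : ∀ ω, W ω = 0 ∨ W ω = 1)
    (Y0 Y1 : Ω → ℝ) (hY0m : Measurable Y0) (hY1m : Measurable Y1)
    (hY0i : Integrable Y0 μ) (hY1i : Integrable Y1 μ)
    (Y : Ω → ℝ) (hY : ∀ ω, Y ω = W ω * Y1 ω + (1 - W ω) * Y0 ω)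
    (hunconf : CondIndepFun (MeasurableSpace.comap X inferInstance) hX.comap_le
      (fun ω => (Y0 ω, Y1 ω)) W μ)
    (m₀ m₁ : 𝒳 → ℝ) (hm₀ : Measurable m₀) (hm₁ : Measurable m₁)
    (hm₀v : μ[Y0 | MeasurableSpace.comap X inferInstance] =ᵐ[μ] fun ω => m₀ (X ω))
    (hm₁v : μ[Y1 | MeasurableSpace.comap X inferInstance] =ᵐ[μ] fun ω => m₁ (X ω))
    (etil : 𝒳 → ℝ) (hetil : Measurable etil)
    (η : ℝ) (hη0 : 0 < η) (hη : η < 1 / 2)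
    (hovl : ∀ x, η ≤ etil x ∧ etil x ≤ 1 - η) :
    ∫ ω, (m₁ (X ω) - m₀ (X ω) + W ω * (Y ω - m₁ (X ω)) / etil (X ω)
        - (1 - W ω) * (Y ω - m₀ (X ω)) / (1 - etil (X ω))) ∂μ
      = ∫ ω, (Y1 ω - Y0 ω) ∂μ :=
  aipw_unbiased_when_outcome_models_correct_general μ X hX W hWm hW01 Y0 Y1 hY0m hY1m hY0i hY1i Y hY
    hunconf m₀ m₁ hm₀v hm₁v etil hetil η hη0 hovl
end
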